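/- Let 𝒞 be a reduced (m,n,r)-scheme with m = 2r, and let X,Y be fibers of 𝒞 with X ≠ Y. Then: (i) d_T = 2 for every T ∈ ℛ_{X,Y}; (ii) d_R ∈ {1,2,4} for every R ∈ ℛ_X, and |{R ∈ ℛ_X : d_R = 1}| = 2·|{R ∈ ℛ_X : d_R = 4}|. -/

import Mathlib

/-!
All fibers have size `m`, so double counting `T ⊆ X × Y` gives `d_T = e_T`; in a reduced scheme
this forces `d_T ≥ 2` when `X ≠ Y`, and since the `r` out-degrees of `ℛ_{X,Y}` add up to
`|Y| = 2r`, all of them equal `2`.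

For `R ∈ ℛ_X` choose `(x, x') ∈ R`, a point `y ∈ Y`, and `T ∋ (x, y)`, `T' ∋ (x', y)` in
`ℛ_{X,Y}`. Then `c := c_{T T'^t}^R ≥ 1` and `c' := c_{R T'}^T ≤ e_{T'} = 2`, and double counting
around `x` gives `d_R c = d_T c' = 2 c'`. So `d_R ≤ 4`, and `d_R = 3` would make `c` even, hence
`3c ≥ 6 > 4`.

Finally the `r` out-degrees of `ℛ_X` add up to `|X| = 2r`, so `∑ (d_R - 2) = 0`, with
`d_R - 2 ∈ {-1, 0, 2}`.
-/

open scoped Classical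

namespace CCPaper

variable {V : Type*}

/-- The diagonal relation `Δ_X = {(x,x) : x ∈ X}` on a subset `X ⊆ V`. -/
def diag (X : Set V) : Set (V × V) := {p : V × V | p.1 ∈ X ∧ p.1 = p.2}

/-- The transpose `R^t = {(v,u) : (u,v) ∈ R}` of a relation. -/
def transp (R : Set (V × V)) : Set (V × V) := Prod.swap ⁻¹' R

/-- The intersection number `|{w : (p.1,w) ∈ R, (w,p.2) ∈ S}|` at a pair `p`. -/
noncomputable def iNum (R S : Set (V × V)) (p : V × V) : ℕ :=
  Nat.card {w : V | (p.1, w) ∈ R ∧ (w, p.2) ∈ S}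

/-- `ℛ` is a coherent configuration (scheme) on the finite set `V`:
(C1) `ℛ` consists of nonempty relations partitioning `V × V`;
(C2) the diagonal is a union of relations of `ℛ`;
(C3) `ℛ` is closed under transposition;
(C4) intersection numbers are constant on each relation of `ℛ`. -/
def IsCC [Fintype V] (ℛ : Set (Set (V × V))) : Prop :=
  (∀ R ∈ ℛ, R.Nonempty) ∧
  (∀ p : V × V, ∃! R, R ∈ ℛ ∧ p ∈ R) ∧
  (∀ R ∈ ℛ, (∃ p ∈ R, p.1 = p.2) → ∀ p ∈ R, p.1 = p.2) ∧
  (∀ R ∈ ℛ, transp R ∈ ℛ) ∧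
  (∀ R ∈ ℛ, ∀ S ∈ ℛ, ∀ T ∈ ℛ, ∀ p ∈ T, ∀ q ∈ T, iNum R S p = iNum R S q)

/-- A fiber of the configuration: a nonempty `X ⊆ V` with `Δ_X ∈ ℛ`. -/
def IsFiber [Fintype V] (ℛ : Set (Set (V × V))) (X : Set V) : Prop :=
  X.Nonempty ∧ diag X ∈ ℛ

/-- `ℛ_{X,Y}`, the set of basis relations contained in `X × Y`. -/
def relsBtw [Fintype V] (ℛ : Set (Set (V × V))) (X Y : Set V) : Set (Set (V × V)) :=
  {R | R ∈ ℛ ∧ R ⊆ X ×ˢ Y}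

/-- Out-degree `d_R = |R_out(x)|` (computed at a chosen point of `R`;
for a basis relation of a scheme this is independent of the point). -/
noncomputable def outDeg (R : Set (V × V)) : ℕ :=
  if h : R.Nonempty then Nat.card {y : V | (h.choose.1, y) ∈ R} else 0

/-- In-degree `e_R = |R_in(y)|` (computed at a chosen point of `R`). -/
noncomputable def inDeg (R : Set (V × V)) : ℕ :=
  if h : R.Nonempty then Nat.card {x : V | (x, h.choose.2) ∈ R} else 0

/-- The structure constant `c_{RS}^T` (computed at a chosen pair of `T`). -/
noncomputable def sConst (R S T : Set (V × V)) : ℕ :=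
  if h : T.Nonempty then iNum R S h.choose else 0

/-- The complex product `RS = {T ∈ ℛ : c_{RS}^T > 0}`. -/
def cProd [Fintype V] (ℛ : Set (Set (V × V))) (R S : Set (V × V)) : Set (Set (V × V)) :=
  {T | T ∈ ℛ ∧ 0 < sConst R S T}

/-- A relation is thin if `d_R = e_R = 1`. -/
def IsThin (R : Set (V × V)) : Prop := outDeg R = 1 ∧ inDeg R = 1

/-- `ℛ` is `r`-balanced: `|ℛ_{X,Y}| = r` for all fibers `X, Y`. -/
def IsBalancedWith [Fintype V] (ℛ : Set (Set (V × V))) (r : ℕ) : Prop :=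
  ∀ X Y : Set V, IsFiber ℛ X → IsFiber ℛ Y → Nat.card (relsBtw ℛ X Y) = r

/-- `ℛ` is balanced: `|ℛ_{X,Y}|` is the same for all pairs of fibers. -/
def IsBalanced [Fintype V] (ℛ : Set (Set (V × V))) : Prop := ∃ r : ℕ, IsBalancedWith ℛ r

/-- An `(m,n,r)`-scheme: a coherent configuration which is `r`-balanced, all of whose
fibers have size `m`, and which has exactly `n` fibers. -/
def IsMNRScheme [Fintype V] (ℛ : Set (Set (V × V))) (m n r : ℕ) : Prop :=
  IsCC ℛ ∧ IsBalancedWith ℛ r ∧ (∀ X : Set V, IsFiber ℛ X → Nat.card X = m) ∧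
    Nat.card {X : Set V | IsFiber ℛ X} = n

/-- A scheme is reduced if no basis relation between distinct fibers is thin. -/
def IsReduced [Fintype V] (ℛ : Set (Set (V × V))) : Prop :=
  ∀ X Y : Set V, IsFiber ℛ X → IsFiber ℛ Y → X ≠ Y → ∀ R ∈ relsBtw ℛ X Y, ¬ IsThin R

/-- A (possibly empty) union of fibers. -/
def IsFiberUnion [Fintype V] (ℛ : Set (Set (V × V))) (U : Set V) : Prop :=
  ∃ F : Set (Set V), (∀ X ∈ F, IsFiber ℛ X) ∧ U = ⋃₀ F

/-- The adjacency matrix of a relation. -/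
noncomputable def adjMat [Fintype V] (R : Set (V × V)) : Matrix V V ℂ :=
  fun u v => if (u, v) ∈ R then 1 else 0

/-- The diagonal idempotent `I_X` of a subset `X ⊆ V`. -/
noncomputable def idMat [Fintype V] (X : Set V) : Matrix V V ℂ :=
  fun u v => if u = v ∧ u ∈ X then 1 else 0

/-- The adjacency algebra `𝒜(𝒞)`, the subalgebra of `Mat_V(ℂ)` spanned by the
adjacency matrices of the basis relations. -/
noncomputable def adjAlg [Fintype V] [DecidableEq V] (ℛ : Set (Set (V × V))) :
    Subalgebra ℂ (Matrix V V ℂ) :=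
  Algebra.adjoin ℂ (adjMat '' ℛ)

/-- `P` is a central primitive idempotent of the (multiplicatively closed) set of
matrices `S`: `P ∈ S` is a nonzero idempotent commuting with everything in `S`, which is
not the sum of two nonzero orthogonal central idempotents of `S`. -/
def IsCPIin [Fintype V] (S : Set (Matrix V V ℂ)) (P : Matrix V V ℂ) : Prop :=
  P ∈ S ∧ P ≠ 0 ∧ P * P = P ∧ (∀ Q ∈ S, P * Q = Q * P) ∧
  ∀ Q₁ Q₂ : Matrix V V ℂ, Q₁ ∈ S → Q₂ ∈ S →
    Q₁ * Q₁ = Q₁ → Q₂ * Q₂ = Q₂ →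
    (∀ M ∈ S, Q₁ * M = M * Q₁) → (∀ M ∈ S, Q₂ * M = M * Q₂) →
    Q₁ * Q₂ = 0 → Q₂ * Q₁ = 0 → P = Q₁ + Q₂ → Q₁ = 0 ∨ Q₂ = 0

/-- `𝒫(𝒞)`: the set of central primitive idempotents of the adjacency algebra. -/
def CPIs [Fintype V] [DecidableEq V] (ℛ : Set (Set (V × V))) : Set (Matrix V V ℂ) :=
  {P | IsCPIin (adjAlg ℛ : Set (Matrix V V ℂ)) P}

/-- The adjacency algebra `I_X · 𝒜(𝒞) · I_X` of the homogeneous component `𝒞_X`,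
as a subset of `Mat_V(ℂ)`. -/
def compAlgSet [Fintype V] [DecidableEq V] (ℛ : Set (Set (V × V))) (X : Set V) :
    Set (Matrix V V ℂ) :=
  {M | ∃ N ∈ adjAlg ℛ, M = idMat X * N * idMat X}

/-- `𝒫(𝒞_X)`: the central primitive idempotents of the homogeneous component `𝒞_X`. -/
def CPIsComp [Fintype V] [DecidableEq V] (ℛ : Set (Set (V × V))) (X : Set V) :
    Set (Matrix V V ℂ) :=
  {P | IsCPIin (compAlgSet ℛ X) P}

/-- The degree `n_P` of a central primitive idempotent `P` of the algebra (given as the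
set `S`): the positive integer with `n_P ^ 2 = dim_ℂ (S · P)`. -/
noncomputable def degOf [Fintype V] [DecidableEq V] (S : Set (Matrix V V ℂ))
    (P : Matrix V V ℂ) : ℕ :=
  Nat.sqrt (Module.finrank ℂ
    (Submodule.span ℂ {M : Matrix V V ℂ | ∃ a ∈ S, M = a * P}))

open Finset

lemma card_filter_eq_one_eq_two_mul_card_filter_eq_four {ι : Type*} (s : Finset ι) (f : ι → ℕ)
    (hf : ∀ i ∈ s, f i = 1 ∨ f i = 2 ∨ f i = 4) (hsum : ∑ i ∈ s, f i = 2 * #s) :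
    #{i ∈ s | f i = 1} = 2 * #{i ∈ s | f i = 4} := by
  have hpoint : ∀ i ∈ s, (f i : ℤ) =
      2 + 2 * (if f i = 4 then 1 else 0) - (if f i = 1 then 1 else 0) := by
    intro i hi
    rcases hf i hi with hi | hi | hi <;> simp [hi]
  have hz : ∑ i ∈ s, (f i : ℤ) = ∑ _i ∈ s, (2 : ℤ) := by
    rw [sum_const, nsmul_eq_mul, mul_comm]
    exact_mod_cast hsum
  rw [sum_congr rfl hpoint, sum_sub_distrib, sum_add_distrib, ← mul_sum, ← natCast_card_filter,
    ← natCast_card_filter] at hz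
  omega

lemma natCard_setOf_eq_card {α : Type*} [Fintype α] (p : α → Prop) [DecidablePred p] :
    Nat.card {a | p a} = #{a | p a} := by
  rw [Nat.card_eq_card_toFinset, Set.toFinset_ofPred]

lemma iNum_eq_card [Fintype V] (R S : Set (V × V)) (x z : V) :
    iNum R S (x, z) = #{w | (x, w) ∈ R ∧ (w, z) ∈ S} :=
  natCard_setOf_eq_card fun w => (x, w) ∈ R ∧ (w, z) ∈ S

lemma iNum_pos_iff [Fintype V] {R S : Set (V × V)} {p : V × V} :
    0 < iNum R S p ↔ ∃ w, (p.1, w) ∈ R ∧ (w, p.2) ∈ S := by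
  rw [iNum, Nat.card_pos_iff]
  exact ⟨fun ⟨⟨⟨w, hw⟩⟩, _⟩ => ⟨w, hw⟩, fun ⟨w, hw⟩ => ⟨⟨⟨w, hw⟩⟩, Subtype.finite⟩⟩

lemma iNum_transp_self [Fintype V] (R : Set (V × V)) (x : V) :
    iNum R (transp R) (x, x) = #{y | (x, y) ∈ R} := by
  simp only [iNum_eq_card, transp, Set.mem_preimage, Prod.swap_prod_mk, and_self]

lemma outDeg_pos [Fintype V] {R : Set (V × V)} (hR : R.Nonempty) : 0 < outDeg R := by
  rw [outDeg, dif_pos hR, Nat.card_pos_iff]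
  exact ⟨⟨⟨hR.choose.2, hR.choose_spec⟩⟩, Subtype.finite⟩

namespace IsCC

variable [Fintype V] {ℛ : Set (Set (V × V))}

lemma eq_of_mem (h : IsCC ℛ) {R S : Set (V × V)} {p : V × V} (hR : R ∈ ℛ) (hS : S ∈ ℛ)
    (hpR : p ∈ R) (hpS : p ∈ S) : R = S :=
  (h.2.1 p).unique ⟨hR, hpR⟩ ⟨hS, hpS⟩

lemma iNum_eq (h : IsCC ℛ) {R S T : Set (V × V)} (hR : R ∈ ℛ) (hS : S ∈ ℛ) (hT : T ∈ ℛ)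
    {p q : V × V} (hp : p ∈ T) (hq : q ∈ T) : iNum R S p = iNum R S q :=
  h.2.2.2.2 R hR S hS T hT p hp q hq

lemma fst_mem (h : IsCC ℛ) {X : Set V} (hX : IsFiber ℛ X) {R : Set (V × V)} (hR : R ∈ ℛ)
    {p q : V × V} (hp : p ∈ R) (hq : q ∈ R) (hpX : p.1 ∈ X) : q.1 ∈ X := by
  have hpos : 0 < iNum (diag X) R p := iNum_pos_iff.2 ⟨p.1, ⟨hpX, rfl⟩, hp⟩
  obtain ⟨w, hw, -⟩ := iNum_pos_iff.1 (h.iNum_eq hX.2 hR hR hp hq ▸ hpos)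
  exact hw.1

lemma snd_mem (h : IsCC ℛ) {Y : Set V} (hY : IsFiber ℛ Y) {R : Set (V × V)} (hR : R ∈ ℛ)
    {p q : V × V} (hp : p ∈ R) (hq : q ∈ R) (hpY : p.2 ∈ Y) : q.2 ∈ Y := by
  have hpos : 0 < iNum R (diag Y) p := iNum_pos_iff.2 ⟨p.2, hp, hpY, rfl⟩
  obtain ⟨w, -, hwY, hwq⟩ := iNum_pos_iff.1 (h.iNum_eq hR hY.2 hR hp hq ▸ hpos)
  exact hwq ▸ hwY

lemma exists_mem_relsBtw (h : IsCC ℛ) {X Y : Set V} (hX : IsFiber ℛ X) (hY : IsFiber ℛ Y)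
    {x y : V} (hx : x ∈ X) (hy : y ∈ Y) : ∃ R ∈ relsBtw ℛ X Y, (x, y) ∈ R := by
  obtain ⟨R, ⟨hR, hxy⟩, -⟩ := h.2.1 (x, y)
  exact ⟨R, ⟨hR, fun q hq => ⟨h.fst_mem hX hR hxy hq hx, h.snd_mem hY hR hxy hq hy⟩⟩, hxy⟩

lemma transp_mem_relsBtw (h : IsCC ℛ) {X Y : Set V} {R : Set (V × V)} (hR : R ∈ relsBtw ℛ X Y) :
    transp R ∈ relsBtw ℛ Y X :=
  ⟨h.2.2.2.1 R hR.1, fun _ hq => (hR.2 hq).symm⟩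

/-- The out-neighbourhoods of the points of `X` all have `outDeg R` elements, as
`c_{R R^t}^{Δ_X}` is constant on `Δ_X`. -/
lemma card_out_eq_outDeg (h : IsCC ℛ) {X Y : Set V} (hX : IsFiber ℛ X) {R : Set (V × V)}
    (hR : R ∈ relsBtw ℛ X Y) {x : V} (hx : x ∈ X) : #{y | (x, y) ∈ R} = outDeg R := by
  have hne : R.Nonempty := h.1 R hR.1
  have hc : hne.choose.1 ∈ X := (hR.2 hne.choose_spec).1
  rw [outDeg, dif_pos hne, natCard_setOf_eq_card, ← iNum_transp_self, ← iNum_transp_self]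
  exact h.iNum_eq hR.1 (h.2.2.2.1 R hR.1) hX.2 ⟨hx, rfl⟩ ⟨hc, rfl⟩

lemma inDeg_eq_outDeg_transp (h : IsCC ℛ) {X Y : Set V} (hY : IsFiber ℛ Y) {R : Set (V × V)}
    (hR : R ∈ relsBtw ℛ X Y) : inDeg R = outDeg (transp R) := by
  have hne : R.Nonempty := h.1 R hR.1
  rw [inDeg, dif_pos hne, natCard_setOf_eq_card,
    ← h.card_out_eq_outDeg hY (h.transp_mem_relsBtw hR) (hR.2 hne.choose_spec).2]
  rfl

lemma card_in_eq_inDeg (h : IsCC ℛ) {X Y : Set V} (hY : IsFiber ℛ Y) {R : Set (V × V)}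
    (hR : R ∈ relsBtw ℛ X Y) {y : V} (hy : y ∈ Y) : #{x | (x, y) ∈ R} = inDeg R := by
  rw [h.inDeg_eq_outDeg_transp hY hR, ← h.card_out_eq_outDeg hY (h.transp_mem_relsBtw hR) hy]
  rfl

lemma sum_outDeg (h : IsCC ℛ) {X Y : Set V} (hX : IsFiber ℛ X) (hY : IsFiber ℛ Y) :
    ∑ R ∈ (relsBtw ℛ X Y).toFinset, outDeg R = Nat.card Y := by
  obtain ⟨x, hx⟩ := hX.1
  have hY_eq : Y.toFinset = (relsBtw ℛ X Y).toFinset.biUnion (fun R => {y | (x, y) ∈ R}) := by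
    ext y
    simp only [Set.mem_toFinset, mem_biUnion, mem_filter, mem_univ, true_and]
    exact ⟨fun hy => h.exists_mem_relsBtw hX hY hx hy, fun ⟨R, hR, hxy⟩ => (hR.2 hxy).2⟩
  have hdisj : Set.PairwiseDisjoint ((relsBtw ℛ X Y).toFinset : Set (Set (V × V)))
      (fun R => ({y | (x, y) ∈ R} : Finset V)) := by
    intro R hR S hS hRS
    refine disjoint_left.2 fun y hyR hyS => hRS ?_
    simp only [mem_filter, mem_univ, true_and] at hyR hyS
    simp only [Set.coe_toFinset] at hR hS
    exact h.eq_of_mem hR.1 hS.1 hyR hyS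
  rw [Nat.card_eq_card_toFinset, hY_eq, card_biUnion hdisj]
  exact sum_congr rfl fun R hR => (h.card_out_eq_outDeg hX (Set.mem_toFinset.1 hR) hx).symm

lemma card_mul_outDeg_eq (h : IsCC ℛ) {X Y : Set V} (hX : IsFiber ℛ X) (hY : IsFiber ℛ Y)
    {R : Set (V × V)} (hR : R ∈ relsBtw ℛ X Y) :
    Nat.card X * outDeg R = Nat.card Y * inDeg R := by
  rw [Nat.card_eq_card_toFinset, Nat.card_eq_card_toFinset]
  refine card_mul_eq_card_mul (fun x y => (x, y) ∈ R) (fun x hx => ?_) (fun y hy => ?_)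
  · rw [Set.mem_toFinset] at hx
    rw [← h.card_out_eq_outDeg hX hR hx, bipartiteAbove]
    congr 1
    ext y
    simpa using fun hxy => (hR.2 hxy).2
  · rw [Set.mem_toFinset] at hy
    rw [← h.card_in_eq_inDeg hY hR hy, bipartiteBelow]
    congr 1
    ext x
    simpa using fun hxy => (hR.2 hxy).1

/-- Counting the pairs `(x', y)` with `(x, x') ∈ R`, `(x, y) ∈ T` and `(x', y) ∈ T'`
once through `x'` and once through `y`. -/
lemma outDeg_mul_iNum_eq (h : IsCC ℛ) {X X' Y : Set V} (hX : IsFiber ℛ X) {R T T' : Set (V × V)}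
    (hR : R ∈ relsBtw ℛ X X') (hT : T ∈ relsBtw ℛ X Y) (hT' : T' ∈ ℛ)
    {x x' y : V} (hxx' : (x, x') ∈ R) (hxy : (x, y) ∈ T) :
    outDeg R * iNum T (transp T') (x, x') = outDeg T * iNum R T' (x, y) := by
  have hx : x ∈ X := (hR.2 hxx').1
  rw [← h.card_out_eq_outDeg hX hR hx, ← h.card_out_eq_outDeg hX hT hx]
  refine card_mul_eq_card_mul (fun a b => (a, b) ∈ T') (fun a ha => ?_) (fun b hb => ?_)
  · rw [mem_filter] at ha
    rw [h.iNum_eq hT.1 (h.2.2.2.1 T' hT') hR.1 hxx' ha.2, iNum_eq_card, bipartiteAbove,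
      filter_filter]
    rfl
  · rw [mem_filter] at hb
    rw [h.iNum_eq hR.1 hT' hT.1 hxy hb.2, iNum_eq_card, bipartiteBelow, filter_filter]

lemma iNum_le_inDeg (h : IsCC ℛ) {X Y : Set V} (hY : IsFiber ℛ Y) {R T : Set (V × V)}
    (hT : T ∈ relsBtw ℛ X Y) (x : V) {y : V} (hy : y ∈ Y) : iNum R T (x, y) ≤ inDeg T := by
  rw [iNum_eq_card, ← h.card_in_eq_inDeg hY hT hy]
  exact card_le_card (monotone_filter_right _ fun _ _ => And.right)

end IsCC

namespace IsMNRScheme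

variable [Fintype V] {ℛ : Set (Set (V × V))} {m n r : ℕ}

lemma inDeg_eq_outDeg (h : IsMNRScheme ℛ m n r) {X Y : Set V} (hX : IsFiber ℛ X)
    (hY : IsFiber ℛ Y) {R : Set (V × V)} (hR : R ∈ relsBtw ℛ X Y) : inDeg R = outDeg R := by
  have hcard := h.1.card_mul_outDeg_eq hX hY hR
  rw [h.2.2.1 X hX, h.2.2.1 Y hY] at hcard
  have hm : 0 < m := h.2.2.1 X hX ▸ Nat.card_pos_iff.2 ⟨hX.1.to_subtype, inferInstance⟩
  exact (Nat.eq_of_mul_eq_mul_left hm hcard).symm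

lemma outDeg_eq_two (h : IsMNRScheme ℛ m n r) (hred : IsReduced ℛ) (hm : m = 2 * r)
    {X Y : Set V} (hX : IsFiber ℛ X) (hY : IsFiber ℛ Y) (hXY : X ≠ Y)
    {T : Set (V × V)} (hT : T ∈ relsBtw ℛ X Y) : outDeg T = 2 := by
  have htwo_le : ∀ T ∈ (relsBtw ℛ X Y).toFinset, 2 ≤ outDeg T := by
    intro T hT
    rw [Set.mem_toFinset] at hT
    have hpos := outDeg_pos (h.1.1 T hT.1)
    have hne_one : outDeg T ≠ 1 := fun hone =>
      hred X Y hX hY hXY T hT ⟨hone, (h.inDeg_eq_outDeg hX hY hT).trans hone⟩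
    omega
  have hsum : ∑ _T ∈ (relsBtw ℛ X Y).toFinset, 2 = ∑ T ∈ (relsBtw ℛ X Y).toFinset, outDeg T := by
    rw [h.1.sum_outDeg hX hY, h.2.2.1 Y hY, sum_const, smul_eq_mul, ← Nat.card_eq_card_toFinset,
      h.2.1 X Y hX hY, hm, mul_comm]
  exact ((sum_eq_sum_iff_of_le htwo_le).1 hsum T (Set.mem_toFinset.2 hT)).symm

lemma outDeg_eq_one_or_two_or_four (h : IsMNRScheme ℛ m n r) (hred : IsReduced ℛ)
    (hm : m = 2 * r) {X Y : Set V} (hX : IsFiber ℛ X) (hY : IsFiber ℛ Y) (hXY : X ≠ Y)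
    {R : Set (V × V)} (hR : R ∈ relsBtw ℛ X X) :
    outDeg R = 1 ∨ outDeg R = 2 ∨ outDeg R = 4 := by
  obtain ⟨⟨x, x'⟩, hxx'⟩ := h.1.1 R hR.1
  obtain ⟨y, hy⟩ := hY.1
  obtain ⟨T, hT, hxy⟩ := h.1.exists_mem_relsBtw hX hY (hR.2 hxx').1 hy
  obtain ⟨T', hT', hx'y⟩ := h.1.exists_mem_relsBtw hX hY (hR.2 hxx').2 hy
  have hcount := h.1.outDeg_mul_iNum_eq hX hR hT hT'.1 hxx' hxy
  have hc_pos : 0 < iNum T (transp T') (x, x') := iNum_pos_iff.2 ⟨y, hxy, hx'y⟩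
  have hc'_le : iNum R T' (x, y) ≤ 2 := by
    rw [← h.outDeg_eq_two hred hm hX hY hXY hT', ← h.inDeg_eq_outDeg hX hY hT']
    exact h.1.iNum_le_inDeg hY hT' x hy
  rw [h.outDeg_eq_two hred hm hX hY hXY hT] at hcount
  have hd_pos := outDeg_pos (h.1.1 R hR.1)
  have hd_le : outDeg R ≤ 4 := (Nat.le_mul_of_pos_right _ hc_pos).trans (by omega)
  interval_cases outDeg R <;> omega

end IsMNRScheme

theorem reduced_m_eq_two_r_general
    {V : Type*} [Fintype V]
    (ℛ : Set (Set (V × V))) (m n r : ℕ) (h : IsMNRScheme ℛ m n r) (hred : IsReduced ℛ)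
    (hm : m = 2 * r)
    (X Y : Set V) (hX : IsFiber ℛ X) (hY : IsFiber ℛ Y) (hXY : X ≠ Y) :
    (∀ T ∈ relsBtw ℛ X Y, outDeg T = 2) ∧
    (∀ R ∈ relsBtw ℛ X X, outDeg R = 1 ∨ outDeg R = 2 ∨ outDeg R = 4) ∧
    Nat.card {R : Set (V × V) | R ∈ relsBtw ℛ X X ∧ outDeg R = 1} =
      2 * Nat.card {R : Set (V × V) | R ∈ relsBtw ℛ X X ∧ outDeg R = 4} := by
  have hdeg : ∀ R ∈ relsBtw ℛ X X, outDeg R = 1 ∨ outDeg R = 2 ∨ outDeg R = 4 :=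
    fun R hR => h.outDeg_eq_one_or_two_or_four hred hm hX hY hXY hR
  refine ⟨fun T hT => h.outDeg_eq_two hred hm hX hY hXY hT, hdeg, ?_⟩
  have hsum : ∑ R ∈ (relsBtw ℛ X X).toFinset, outDeg R = 2 * #(relsBtw ℛ X X).toFinset := by
    rw [h.1.sum_outDeg hX hX, h.2.2.1 X hX, ← Nat.card_eq_card_toFinset, h.2.1 X X hX hX, hm]
  have hcount := card_filter_eq_one_eq_two_mul_card_filter_eq_four _ _
    (fun R hR => hdeg R (Set.mem_toFinset.1 hR)) hsum
  simpa only [Nat.card_eq_card_toFinset, Set.toFinset_ofPred, ← filter_filter,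
    Set.filter_mem_univ_eq_toFinset] using hcount

/-- **Theorem (Statement 17).** Let `𝒞` be a reduced `(m,n,r)`-scheme with `m = 2r` and
let `X ≠ Y` be fibers. Then every `T ∈ ℛ_{X,Y}` has `d_T = 2`; every `R ∈ ℛ_X` has
`d_R ∈ {1,2,4}`; and the number of `R ∈ ℛ_X` with `d_R = 1` is twice the number with
`d_R = 4`. -/
theorem reduced_m_eq_two_r
    {V : Type*} [Fintype V] [Nonempty V]
    (ℛ : Set (Set (V × V))) (m n r : ℕ) (h : IsMNRScheme ℛ m n r) (hred : IsReduced ℛ)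
    (hm : m = 2 * r)
    (X Y : Set V) (hX : IsFiber ℛ X) (hY : IsFiber ℛ Y) (hXY : X ≠ Y) :
    (∀ T ∈ relsBtw ℛ X Y, outDeg T = 2) ∧
    (∀ R ∈ relsBtw ℛ X X, outDeg R = 1 ∨ outDeg R = 2 ∨ outDeg R = 4) ∧
    Nat.card {R : Set (V × V) | R ∈ relsBtw ℛ X X ∧ outDeg R = 1} =
      2 * Nat.card {R : Set (V × V) | R ∈ relsBtw ℛ X X ∧ outDeg R = 4} :=
  reduced_m_eq_two_r_general ℛ m n r h hred hm X Y hX hY hXY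

end CCPaper
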